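/- If all elements of a finite branched continued fraction with independent variables are positive real numbers, then the sequence of approximants satisfies the fork property: for all m, the even approximants increase and the odd approximants decrease, with every even approximant less than or equal to every odd approximant, i.e. f_{2m} ≤ f_{2m+2} ≤ f_{2k+1} ≤ f_{2k−1} for all applicable indices m, k. -/

import Mathlib

/-- The tails of a branched continued fraction with independent variables:
`tailR a b fuel l` is the value of the part of the fraction hanging below the
branch `l = [i_k, …, i_1]` (head = innermost index), computed to depth `fuel`:
`Σ_{i_{k+1} ≤ i_k} a(i(k+1)) / (b(i(k+1)) + tail)`. -/
noncomputable def tailR {N : ℕ} (a b : List (Fin N) → ℝ) : ℕ → List (Fin N) → ℝ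
  | 0, _ => 0
  | fuel + 1, l =>
    match l with
    | [] => 0
    | ik :: _ =>
      ∑ j ∈ Finset.Iic ik, a (j :: l) / (b (j :: l) + tailR a b fuel (j :: l))

/-- The `k`-th approximant
`f_k = b₀ + Σ_{i_1=1}^N a_{i(1)}/(b_{i(1)} + Σ_{i_2≤i_1} a_{i(2)}/(… ))`. -/
noncomputable def approxR {N : ℕ} (b0 : ℝ) (a b : List (Fin N) → ℝ) : ℕ → ℝ
  | 0 => b0
  | k + 1 => b0 + ∑ i : Fin N, a [i] / (b [i] + tailR a b k [i])

/-!
Both the tails and the approximants are obtained by feeding the previous tails into the map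
`t ↦ Σ a / (b + t)`, which is antitone on nonnegative tails. Starting from the zero tail, which
lies below every tail, an antitone recursion forces the even iterates up, the odd iterates down,
and every even iterate below every odd one.
-/

def IsFork {α : Type*} [Preorder α] (x : ℕ → α) : Prop :=
  (∀ m, x (2 * m) ≤ x (2 * m + 2)) ∧ (∀ k, x (2 * k + 3) ≤ x (2 * k + 1)) ∧
    ∀ m k, x (2 * m) ≤ x (2 * k + 1)

section Fork

variable {α β : Type*} [Preorder α] [Preorder β] {x : ℕ → α} {y : ℕ → β}

theorem isFork_of_antitone_step (hbot : ∀ n, x 0 ≤ x n)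
    (hstep : ∀ m n, x m ≤ x n → x (n + 1) ≤ x (m + 1)) : IsFork x := by
  have hstep₂ : ∀ m n, x m ≤ x n → x (m + 2) ≤ x (n + 2) := fun m n h =>
    hstep _ _ (hstep _ _ h)
  have heven : ∀ m, x (2 * m) ≤ x (2 * m + 2) := by
    intro m
    induction m with
    | zero => exact hbot 2
    | succ m ih => exact hstep₂ _ _ ih
  refine ⟨heven, fun k => hstep _ _ (heven k), fun m => ?_⟩
  induction m with
  | zero => exact fun k => hbot _
  | succ m ih =>
    rintro (_ | k)
    · exact hstep _ _ (hbot _)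
    · exact hstep₂ _ _ (ih k)

theorem IsFork.of_antitone_step (hx : IsFork x) (hbot : ∀ n, y 0 ≤ y n)
    (hstep : ∀ m n, x m ≤ x n → y (n + 1) ≤ y (m + 1)) : IsFork y := by
  obtain ⟨heven, hodd, heven_odd⟩ := hx
  refine ⟨?_, fun k => hstep _ _ (heven k), ?_⟩
  · rintro (_ | m)
    · exact hbot 2
    · exact hstep _ _ (hodd m)
  · rintro (_ | m) k
    · exact hbot _
    · exact hstep _ _ (heven_odd k m)

end Fork

section BranchedContinuedFraction

variable {N : ℕ} {a b : List (Fin N) → ℝ}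

theorem div_add_le_div_add_of_le {a b s t : ℝ} (ha : 0 ≤ a) (hb : 0 < b) (hs : 0 ≤ s)
    (hst : s ≤ t) : a / (b + t) ≤ a / (b + s) :=
  div_le_div_of_nonneg_left ha (by linarith) (by linarith)

theorem tailR_nonneg (ha : ∀ l, 0 ≤ a l) (hb : ∀ l, 0 < b l) (n : ℕ) (l : List (Fin N)) :
    0 ≤ tailR a b n l := by
  induction n generalizing l with
  | zero => exact le_rfl
  | succ n ih =>
    rcases l with _ | _
    · exact le_rfl
    · exact Finset.sum_nonneg fun _ _ => div_nonneg (ha _) (add_nonneg (hb _).le (ih _))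

theorem tailR_succ_le_tailR_succ (ha : ∀ l, 0 ≤ a l) (hb : ∀ l, 0 < b l) {m n : ℕ}
    (h : tailR a b m ≤ tailR a b n) : tailR a b (n + 1) ≤ tailR a b (m + 1) := by
  rintro (_ | _)
  · exact le_rfl
  · exact Finset.sum_le_sum fun _ _ =>
      div_add_le_div_add_of_le (ha _) (hb _) (tailR_nonneg ha hb _ _) (h _)

theorem isFork_tailR (ha : ∀ l, 0 ≤ a l) (hb : ∀ l, 0 < b l) : IsFork (tailR a b) :=
  isFork_of_antitone_step (fun n l => tailR_nonneg ha hb n l)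
    fun _ _ => tailR_succ_le_tailR_succ ha hb

theorem le_approxR (b0 : ℝ) (ha : ∀ l, 0 ≤ a l) (hb : ∀ l, 0 < b l) (n : ℕ) :
    b0 ≤ approxR b0 a b n := by
  rcases n with _ | n
  · exact le_rfl
  · exact le_add_of_nonneg_right <| Finset.sum_nonneg fun _ _ =>
      div_nonneg (ha _) (add_nonneg (hb _).le (tailR_nonneg ha hb _ _))

theorem approxR_succ_le_approxR_succ (b0 : ℝ) (ha : ∀ l, 0 ≤ a l) (hb : ∀ l, 0 < b l)
    {m n : ℕ} (h : tailR a b m ≤ tailR a b n) :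
    approxR b0 a b (n + 1) ≤ approxR b0 a b (m + 1) :=
  add_le_add_right (Finset.sum_le_sum fun _ _ =>
    div_add_le_div_add_of_le (ha _) (hb _) (tailR_nonneg ha hb _ _) (h _)) b0

end BranchedContinuedFraction

theorem fork_property_general {N : ℕ} (b0 : ℝ) (a b : List (Fin N) → ℝ)
    (ha : ∀ l : List (Fin N), 0 < a l) (hb : ∀ l : List (Fin N), 0 < b l) :
    (∀ m : ℕ, approxR b0 a b (2 * m) ≤ approxR b0 a b (2 * m + 2)) ∧
    (∀ k : ℕ, approxR b0 a b (2 * k + 3) ≤ approxR b0 a b (2 * k + 1)) ∧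
    (∀ m k : ℕ, approxR b0 a b (2 * m) ≤ approxR b0 a b (2 * k + 1)) := by
  have ha' : ∀ l, 0 ≤ a l := fun l => (ha l).le
  exact (isFork_tailR ha' hb).of_antitone_step (le_approxR b0 ha' hb)
    fun _ _ => approxR_succ_le_approxR_succ b0 ha' hb

/-- Fork property: if all elements of a branched continued fraction with
independent variables are positive, then the even approximants increase, the
odd approximants decrease, and every even approximant is ≤ every odd one:
`f_{2m} ≤ f_{2m+2} ≤ f_{2k+1} ≤ f_{2k−1}`. -/
theorem fork_property {N : ℕ} (b0 : ℝ) (a b : List (Fin N) → ℝ)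
    (ha : ∀ l : List (Fin N), 0 < a l) (hb : ∀ l : List (Fin N), 0 < b l)
    (hb0 : 0 < b0) :
    (∀ m : ℕ, approxR b0 a b (2 * m) ≤ approxR b0 a b (2 * m + 2)) ∧
    (∀ k : ℕ, approxR b0 a b (2 * k + 3) ≤ approxR b0 a b (2 * k + 1)) ∧
    (∀ m k : ℕ, approxR b0 a b (2 * m) ≤ approxR b0 a b (2 * k + 1)) :=
  fork_property_general b0 a b ha hb
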